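/- Let F : C → B be a Galois covering of k-categories. Then Aut₁F acts transitively on every fibre: for every object b of B and all objects x, y of C with F(x) = b = F(y), there exists H ∈ Aut₁F with H(x) = y. -/

import Mathlib

open CategoryTheory

universe w v u

section CoveringDefs

variable (k : Type w) [CommRing k]

/-- A functor between `k`-linear categories is `k`-linear:
it is additive and commutes with the scalar action on morphisms. -/
def IsLinearFunctor {C : Type u} [Category.{v} C] [Preadditive C] [CategoryTheory.Linear k C]
    {B : Type u} [Category.{v} B] [Preadditive B] [CategoryTheory.Linear k B]
    (F : C ⥤ B) : Prop :=
  (∀ (x y : C) (f g : x ⟶ y), F.map (f + g) = F.map f + F.map g) ∧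
  (∀ (x y : C) (r : k) (f : x ⟶ y), F.map (r • f) = r • F.map f)

variable {C : Type u} [Category.{v} C] [Preadditive C] [CategoryTheory.Linear k C]
variable {B : Type u} [Category.{v} B] [Preadditive B] [CategoryTheory.Linear k B]

/-- The canonical map `⊕_{y ∈ F⁻¹(c)} C(x,y) →+ B(F(x),c)` induced by `F`
on the source star. -/
noncomputable def starOutHom (F : C ⥤ B) (hF : IsLinearFunctor k F) (x : C) (c : B) :
    (DirectSum {y : C // F.obj y = c} (fun y => (x ⟶ y.1))) →+ (F.obj x ⟶ c) := by
  classical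
  exact DirectSum.toAddMonoid fun y =>
    AddMonoidHom.mk' (fun f => F.map f ≫ eqToHom y.2)
      (fun f g => by (try simp only []); rw [hF.1 _ _ f g, Preadditive.add_comp])

/-- The canonical map `⊕_{y ∈ F⁻¹(c)} C(y,x) →+ B(c,F(x))` induced by `F`
on the target star. -/
noncomputable def starInHom (F : C ⥤ B) (hF : IsLinearFunctor k F) (x : C) (c : B) :
    (DirectSum {y : C // F.obj y = c} (fun y => (y.1 ⟶ x))) →+ (c ⟶ F.obj x) := by
  classical
  exact DirectSum.toAddMonoid fun y =>
    AddMonoidHom.mk' (fun f => eqToHom y.2.symm ≫ F.map f)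
      (fun f g => by (try simp only []); rw [hF.1 _ _ f g, Preadditive.comp_add])

/-- `F : C ⥤ B` is a covering of `k`-categories: it is a `k`-linear functor,
surjective on objects, inducing bijections on all source and target stars. -/
def IsCovering (F : C ⥤ B) : Prop :=
  ∃ hF : IsLinearFunctor k F,
    Function.Surjective F.obj ∧
    (∀ (x : C) (c : B), Function.Bijective (starOutHom k F hF x c)) ∧
    (∀ (x : C) (c : B), Function.Bijective (starInHom k F hF x c))

end CoveringDefs

/-- A `k`-category is connected if the equivalence relation generated by
"there is a nonzero morphism from `x` to `y`" relates any two objects. -/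
def IsConnectedKCat (C : Type u) [Category.{v} C] [Preadditive C] : Prop :=
  ∀ x y : C, Relation.EqvGen (fun a b : C => ∃ f : a ⟶ b, f ≠ 0) x y

section GaloisDefs

variable (k : Type w) [CommRing k]
variable {C : Type u} [Category.{v} C] [Preadditive C] [CategoryTheory.Linear k C]
variable {B : Type u} [Category.{v} B] [Preadditive B] [CategoryTheory.Linear k B]
variable {D : Type u} [Category.{v} D] [Preadditive D] [CategoryTheory.Linear k D]

/-- `H` belongs to `Aut₁ F`: it is an invertible `k`-linear endofunctor with `F ∘ H = F`. -/
def MemAut1 (F : C ⥤ B) (H : C ⥤ C) : Prop :=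
  IsLinearFunctor k H ∧
  (∃ Hinv : C ⥤ C, H ⋙ Hinv = 𝟭 C ∧ Hinv ⋙ H = 𝟭 C) ∧
  H ⋙ F = F

/-- A covering is Galois if its source is connected and `Aut₁ F` acts transitively
on some fibre. -/
def IsGaloisCovering (F : C ⥤ B) : Prop :=
  IsCovering k F ∧ IsConnectedKCat C ∧
  ∃ b₀ : B, ∀ x y : C, F.obj x = b₀ → F.obj y = b₀ →
    ∃ H : C ⥤ C, MemAut1 k F H ∧ H.obj x = y

/-- A morphism `(H, J)` of coverings from `F : C ⥤ B` to `G : D ⥤ B`: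
`H` and `J` are `k`-linear, `J` is an isomorphism which is the identity on objects,
and `G ∘ H = J ∘ F`. -/
def IsCoveringMorphism (F : C ⥤ B) (G : D ⥤ B) (H : C ⥤ D) (J : B ⥤ B) : Prop :=
  IsLinearFunctor k H ∧ IsLinearFunctor k J ∧
  (∃ Jinv : B ⥤ B, J ⋙ Jinv = 𝟭 B ∧ Jinv ⋙ J = 𝟭 B) ∧
  (∀ b : B, J.obj b = b) ∧
  H ⋙ G = F ⋙ J

end GaloisDefs

/-- A universal covering: a Galois covering `U` such that for every Galois covering
`F : C ⥤ B` and every pair of objects `u₀`, `c₀` above the same object of `B`,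
there is a unique `k`-linear functor `H` with `F ∘ H = U` and `H u₀ = c₀`. -/
def IsUniversalCovering (k : Type w) [CommRing k]
    {U' : Type u} [Category.{v} U'] [Preadditive U'] [CategoryTheory.Linear k U']
    {B : Type u} [Category.{v} B] [Preadditive B] [CategoryTheory.Linear k B]
    (U : U' ⥤ B) : Prop :=
  IsGaloisCovering k U ∧
  ∀ (C : Type u) [Category.{v} C] [Preadditive C] [CategoryTheory.Linear k C]
    (F : C ⥤ B), IsGaloisCovering k F →
    ∀ (u₀ : U') (c₀ : C), U.obj u₀ = F.obj c₀ →
      ∃! H : U' ⥤ C, IsLinearFunctor k H ∧ H ⋙ F = U ∧ H.obj u₀ = c₀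

/-- Given a functor `F : C ⥤ B`, a choice `x` of objects of `C` above each object of `B`,
and an endofunctor `H` of `C`, the subset `Z_H(c,b) = F(C(x_b, H x_c))` of `B(b,c)`. -/
def gradeSet {C : Type u} [Category.{v} C] {B : Type u} [Category.{v} B]
    (F : C ⥤ B) (x : B → C) (H : C ⥤ C) (b c : B) : Set (b ⟶ c) :=
  {g | ∃ (h₁ : b = F.obj (x b)) (h₂ : F.obj (H.obj (x c)) = c)
        (f : x b ⟶ H.obj (x c)), g = eqToHom h₁ ≫ F.map f ≫ eqToHom h₂}

/-- The homogeneous component `Z_H(c,b)` as a `k`-submodule of `B(b,c)`. -/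
noncomputable def gradeSubmodule (k : Type w) [CommRing k]
    {C : Type u} [Category.{v} C]
    {B : Type u} [Category.{v} B] [Preadditive B] [CategoryTheory.Linear k B]
    (F : C ⥤ B) (x : B → C) (H : C ⥤ C) (b c : B) : Submodule k (b ⟶ c) :=
  Submodule.span k (gradeSet F x H b c)

/-!
Transitivity of `Aut₁ F` on fibres propagates along nonzero morphisms. Let `f : z ⟶ w` be
nonzero, `Aut₁ F` transitive on the fibre of `F z`, and `w'` above `F w`. Decompose `F f` in the
target star of `w'` as a sum of images of morphisms `g_y : y ⟶ w'`, and move each `y` to `z` by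
some `K_y ∈ Aut₁ F`: this gives a decomposition of `F f` in the source star of `z` supported on
the `Aut₁ F`-orbit of `w'`. Since the source star is injective, it is the trivial decomposition
`f`, so `w` lies in the orbit of `w'`. The dual argument handles `f : w ⟶ z`, and connectedness
of `C` carries transitivity from the fibre of `b₀` to every fibre.
-/

namespace DirectSum

variable {ι : Type*} (β : ι → Type*) [∀ i, AddCommMonoid (β i)]

def supported (T : Set ι) : AddSubmonoid (⨁ i, β i) where
  carrier := {α | ∀ i, α i ≠ 0 → i ∈ T}
  zero_mem' i h := absurd rfl h
  add_mem' {α α'} hα hα' i h := by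
    by_cases hi : α i = 0
    · exact hα' i (by rwa [add_apply, hi, zero_add] at h)
    · exact hα i hi

variable {β}

theorem of_mem_supported [DecidableEq ι] {T : Set ι} {i : ι} (hi : i ∈ T) (x : β i) :
    of β i x ∈ supported β T := by
  intro j hj
  obtain rfl : j = i := by_contra fun hji => hj (of_eq_of_ne i j x hji)
  exact hi

end DirectSum

section LinearFunctor

variable {k : Type w} [CommRing k]
variable {C : Type u} [Category.{v} C] [Preadditive C] [CategoryTheory.Linear k C]
variable {D : Type u} [Category.{v} D] [Preadditive D] [CategoryTheory.Linear k D]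

theorem IsLinearFunctor.comp {H : C ⥤ D} {G : D ⥤ C} (hH : IsLinearFunctor k H)
    (hG : IsLinearFunctor k G) : IsLinearFunctor k (H ⋙ G) :=
  ⟨fun _ _ f g => by simp only [Functor.comp_map, hH.1, hG.1],
    fun _ _ r f => by simp only [Functor.comp_map, hH.2, hG.2]⟩

theorem IsLinearFunctor.of_inverse {H : C ⥤ D} {G : D ⥤ C} (hH : IsLinearFunctor k H)
    (hHG : H ⋙ G = 𝟭 C) (hGH : G ⋙ H = 𝟭 D) : IsLinearFunctor k G := by
  have : H.Faithful := Functor.Faithful.of_comp_eq hHG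
  have hmap {x y : D} (f : x ⟶ y) := Functor.congr_hom hGH f
  simp only [Functor.comp_map, Functor.id_map] at hmap
  refine ⟨fun x y f g => H.map_injective ?_, fun x y r f => H.map_injective ?_⟩
  · rw [hH.1, hmap, hmap, hmap, Preadditive.add_comp, Preadditive.comp_add]
  · rw [hH.2, hmap, hmap, Linear.smul_comp, Linear.comp_smul]

end LinearFunctor

section Aut1

variable (k : Type w) [CommRing k]
variable {C : Type u} [Category.{v} C] [Preadditive C] [CategoryTheory.Linear k C]
variable {B : Type u} [Category.{v} B]

def Aut1Related (F : C ⥤ B) (x y : C) : Prop :=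
  ∃ H : C ⥤ C, MemAut1 k F H ∧ H.obj x = y

def IsFibreTransitive (F : C ⥤ B) (b : B) : Prop :=
  ∀ x y : C, F.obj x = b → F.obj y = b → Aut1Related k F x y

variable {k} {F : C ⥤ B} {H G : C ⥤ C}

theorem MemAut1.obj (hH : MemAut1 k F H) (x : C) : F.obj (H.obj x) = F.obj x :=
  Functor.congr_obj hH.2.2 x

theorem MemAut1.map (hH : MemAut1 k F H) {x y : C} (f : x ⟶ y) :
    F.map (H.map f) = eqToHom (hH.obj x) ≫ F.map f ≫ eqToHom (hH.obj y).symm :=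
  Functor.congr_hom hH.2.2 f

theorem memAut1_id : MemAut1 k F (𝟭 C) :=
  ⟨⟨fun _ _ _ _ => rfl, fun _ _ _ _ => rfl⟩, ⟨𝟭 C, rfl, rfl⟩, rfl⟩

theorem MemAut1.comp (hH : MemAut1 k F H) (hG : MemAut1 k F G) : MemAut1 k F (H ⋙ G) := by
  obtain ⟨hHlin, ⟨H', hHH', hH'H⟩, hHF⟩ := hH
  obtain ⟨hGlin, ⟨G', hGG', hG'G⟩, hGF⟩ := hG
  refine ⟨hHlin.comp hGlin, ⟨G' ⋙ H', ?_, ?_⟩, ?_⟩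
  · change H ⋙ (G ⋙ G') ⋙ H' = 𝟭 C
    rw [hGG', Functor.id_comp, hHH']
  · change G' ⋙ (H' ⋙ H) ⋙ G = 𝟭 C
    rw [hH'H, Functor.id_comp, hG'G]
  · rw [Functor.assoc, hGF, hHF]

theorem MemAut1.of_inverse (hH : MemAut1 k F H) (hHG : H ⋙ G = 𝟭 C) (hGH : G ⋙ H = 𝟭 C) :
    MemAut1 k F G := by
  refine ⟨hH.1.of_inverse hHG hGH, ⟨H, hGH, hHG⟩, ?_⟩
  calc G ⋙ F = G ⋙ H ⋙ F := by rw [hH.2.2]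
    _ = F := by rw [← Functor.assoc, hGH, Functor.id_comp]

theorem aut1Related_equivalence : Equivalence (Aut1Related k F) where
  refl _ := ⟨𝟭 C, memAut1_id, rfl⟩
  symm := by
    rintro x _ ⟨H, hH, rfl⟩
    obtain ⟨G, hHG, hGH⟩ := hH.2.1
    exact ⟨G, hH.of_inverse hHG hGH, Functor.congr_obj hHG x⟩
  trans := by
    rintro x _ _ ⟨H, hH, rfl⟩ ⟨G, hG, rfl⟩
    exact ⟨H ⋙ G, hH.comp hG, rfl⟩

theorem IsFibreTransitive.of_forall_aut1Related {b : B} {w : C}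
    (h : ∀ w', F.obj w' = b → Aut1Related k F w w') : IsFibreTransitive k F b :=
  fun w₁ w₂ hw₁ hw₂ =>
    aut1Related_equivalence.trans (aut1Related_equivalence.symm (h w₁ hw₁)) (h w₂ hw₂)

end Aut1

section Covering

variable {k : Type w} [CommRing k]
variable {C : Type u} [Category.{v} C] [Preadditive C] [CategoryTheory.Linear k C]
variable {B : Type u} [Category.{v} B] [Preadditive B] [CategoryTheory.Linear k B]
variable {F : C ⥤ B} (hF : IsLinearFunctor k F)

theorem starOutHom_of {x : C} {c : B} [DecidableEq {y : C // F.obj y = c}]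
    (y : {y : C // F.obj y = c}) (f : x ⟶ y.1) :
    starOutHom k F hF x c (DirectSum.of _ y f) = F.map f ≫ eqToHom y.2 := by
  unfold starOutHom
  convert DirectSum.toAddMonoid_of (β := fun y : {y // F.obj y = c} => x ⟶ y.1) _ y f
  rfl

theorem starInHom_of {x : C} {c : B} [DecidableEq {y : C // F.obj y = c}]
    (y : {y : C // F.obj y = c}) (f : y.1 ⟶ x) :
    starInHom k F hF x c (DirectSum.of _ y f) = eqToHom y.2.symm ≫ F.map f := by
  unfold starInHom
  convert DirectSum.toAddMonoid_of (β := fun y : {y // F.obj y = c} => y.1 ⟶ x) _ y f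
  rfl

theorem exists_mem_supported_starOutHom_eq {z w' : C} {c : B} (hw' : F.obj w' = c)
    (hz : IsFibreTransitive k F (F.obj z))
    (hin : Function.Surjective (starInHom k F hF w' (F.obj z))) (φ : F.obj z ⟶ c) :
    ∃ α ∈ DirectSum.supported _ {y | Aut1Related k F y.1 w'}, starOutHom k F hF z c α = φ := by
  classical
  obtain ⟨γ, hγ⟩ := hin (φ ≫ eqToHom hw'.symm)
  obtain rfl : φ = starInHom k F hF w' (F.obj z) γ ≫ eqToHom hw' := by simp [hγ]
  clear hγ
  refine AddSubmonoid.mem_map.mp ?_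
  induction γ using DirectSum.induction_on with
  | zero => simp only [map_zero, Limits.zero_comp, zero_mem]
  | of y g =>
    obtain ⟨K, hK, hKy⟩ := hz y.1 z y.2 rfl
    refine ⟨DirectSum.of _ ⟨K.obj w', (hK.obj w').trans hw'⟩ (eqToHom hKy.symm ≫ K.map g),
      DirectSum.of_mem_supported ?_ _, ?_⟩
    · exact aut1Related_equivalence.symm ⟨K, hK, rfl⟩
    · rw [starOutHom_of, starInHom_of, F.map_comp, hK.map g]
      simp [eqToHom_map]
  | add γ₁ γ₂ h₁ h₂ =>
    rw [map_add, Preadditive.add_comp]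
    exact add_mem h₁ h₂

theorem exists_mem_supported_starInHom_eq {z w' : C} {c : B} (hw' : F.obj w' = c)
    (hz : IsFibreTransitive k F (F.obj z))
    (hout : Function.Surjective (starOutHom k F hF w' (F.obj z))) (φ : c ⟶ F.obj z) :
    ∃ α ∈ DirectSum.supported _ {y | Aut1Related k F y.1 w'}, starInHom k F hF z c α = φ := by
  classical
  obtain ⟨γ, hγ⟩ := hout (eqToHom hw' ≫ φ)
  obtain rfl : φ = eqToHom hw'.symm ≫ starOutHom k F hF w' (F.obj z) γ := by simp [hγ]
  clear hγ
  refine AddSubmonoid.mem_map.mp ?_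
  induction γ using DirectSum.induction_on with
  | zero => simp only [map_zero, Limits.comp_zero, zero_mem]
  | of y g =>
    obtain ⟨K, hK, hKy⟩ := hz y.1 z y.2 rfl
    refine ⟨DirectSum.of _ ⟨K.obj w', (hK.obj w').trans hw'⟩ (K.map g ≫ eqToHom hKy),
      DirectSum.of_mem_supported ?_ _, ?_⟩
    · exact aut1Related_equivalence.symm ⟨K, hK, rfl⟩
    · rw [starInHom_of, starOutHom_of, F.map_comp, hK.map g]
      simp [eqToHom_map]
  | add γ₁ γ₂ h₁ h₂ =>
    rw [map_add, Preadditive.comp_add]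
    exact add_mem h₁ h₂

theorem IsFibreTransitive.cod_of_hom_ne_zero {z w : C} (hz : IsFibreTransitive k F (F.obj z))
    {f : z ⟶ w} (hf : f ≠ 0) (hout : Function.Injective (starOutHom k F hF z (F.obj w)))
    (hin : ∀ w', Function.Surjective (starInHom k F hF w' (F.obj z))) :
    IsFibreTransitive k F (F.obj w) := by
  classical
  refine IsFibreTransitive.of_forall_aut1Related (w := w) fun w' hw' => ?_
  obtain ⟨α, hα, hαf⟩ := exists_mem_supported_starOutHom_eq hF hw' hz (hin w') (F.map f)
  have hαw : α = DirectSum.of _ ⟨w, rfl⟩ f :=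
    hout (by rw [hαf, starOutHom_of, eqToHom_refl, Category.comp_id])
  exact hα ⟨w, rfl⟩ (by rwa [hαw, DirectSum.of_eq_same])

theorem IsFibreTransitive.dom_of_hom_ne_zero {z w : C} (hz : IsFibreTransitive k F (F.obj z))
    {f : w ⟶ z} (hf : f ≠ 0) (hin : Function.Injective (starInHom k F hF z (F.obj w)))
    (hout : ∀ w', Function.Surjective (starOutHom k F hF w' (F.obj z))) :
    IsFibreTransitive k F (F.obj w) := by
  classical
  refine IsFibreTransitive.of_forall_aut1Related (w := w) fun w' hw' => ?_
  obtain ⟨α, hα, hαf⟩ := exists_mem_supported_starInHom_eq hF hw' hz (hout w') (F.map f)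
  have hαw : α = DirectSum.of _ ⟨w, rfl⟩ f :=
    hin (by rw [hαf, starInHom_of, eqToHom_refl, Category.id_comp])
  exact hα ⟨w, rfl⟩ (by rwa [hαw, DirectSum.of_eq_same])

theorem isFibreTransitive_iff_of_eqvGen (hcov : IsCovering k F) {z w : C}
    (h : Relation.EqvGen (fun a b : C => ∃ f : a ⟶ b, f ≠ 0) z w) :
    IsFibreTransitive k F (F.obj z) ↔ IsFibreTransitive k F (F.obj w) := by
  obtain ⟨hLin, -, hout, hin⟩ := hcov
  induction h with
  | rel a b hab =>
    obtain ⟨f, hf⟩ := hab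
    exact ⟨fun ha => ha.cod_of_hom_ne_zero hLin hf (hout a _).1 fun w' => (hin w' _).2,
      fun hb => hb.dom_of_hom_ne_zero hLin hf (hin b _).1 fun w' => (hout w' _).2⟩
  | refl => exact Iff.rfl
  | symm _ _ _ ih => exact ih.symm
  | trans _ _ _ _ _ ih₁ ih₂ => exact ih₁.trans ih₂

end Covering

theorem galois_aut_transitive_on_every_fibre (k : Type w) [CommRing k]
    {C : Type u} [Category.{v} C] [Preadditive C] [CategoryTheory.Linear k C]
    {B : Type u} [Category.{v} B] [Preadditive B] [CategoryTheory.Linear k B]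
    (F : C ⥤ B) (hF : IsGaloisCovering k F) :
    ∀ (b : B) (x y : C), F.obj x = b → F.obj y = b →
      ∃ H : C ⥤ C, MemAut1 k F H ∧ H.obj x = y := by
  obtain ⟨hcov, hconn, b₀, hb₀⟩ := hF
  obtain ⟨z₀, rfl⟩ := hcov.2.1 b₀
  rintro _ x y rfl hy
  exact (isFibreTransitive_iff_of_eqvGen hcov (hconn z₀ x)).mp hb₀ x y rfl hy
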